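/- Let L be a subdirectly irreducible pk-algebra such that every prime filter of L that is not maximal is contained in every maximal prime filter, and such that every prime filter P in Body(L) satisfies φ(P) = P (i.e. the dual space of L is of Type 1 or Type 2). Then L satisfies T(a)* ∨ C(b) = C(a) ∨ T(b)* for all a, b ∈ L. -/

import Mathlib

/-- A pseudocomplemented De Morgan algebra (pm-algebra): a bounded distributive
lattice with a De Morgan involution `dm` and a pseudocomplement `pc`. -/
class PMAlgebra (L : Type*) extends DistribLattice L, BoundedOrder L where
  dm : L → L
  pc : L → L
  dm_dm : ∀ a : L, dm (dm a) = a
  dm_inf : ∀ a b : L, dm (a ⊓ b) = dm a ⊔ dm b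
  pc_iff : ∀ a b : L, a ⊓ b = ⊥ ↔ b ≤ pc a

namespace PMAlgebra

variable {L : Type*} [PMAlgebra L]

/-- A congruence of a pm-algebra. -/
def IsCongruence (θ : L → L → Prop) : Prop :=
  Equivalence θ ∧
  (∀ a b c d : L, θ a b → θ c d → θ (a ⊓ c) (b ⊓ d)) ∧
  (∀ a b c d : L, θ a b → θ c d → θ (a ⊔ c) (b ⊔ d)) ∧
  (∀ a b : L, θ a b → θ (dm a) (dm b)) ∧
  (∀ a b : L, θ a b → θ (pc a) (pc b))

/-- `L` is simple: it has more than one element and its only congruences are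
equality and the total relation. -/
def Simple (L : Type*) [PMAlgebra L] : Prop :=
  Nontrivial L ∧ ∀ θ : L → L → Prop, IsCongruence θ →
    θ = (fun a b => a = b) ∨ θ = (fun _ _ => True)

/-- `L` is subdirectly irreducible: there is a congruence `μ ≠ Eq` contained in
every congruence different from equality. -/
def SubdirectlyIrreducible (L : Type*) [PMAlgebra L] : Prop :=
  ∃ μ : L → L → Prop, IsCongruence μ ∧ μ ≠ (fun a b => a = b) ∧
    ∀ θ : L → L → Prop, IsCongruence θ → θ ≠ (fun a b => a = b) →
      ∀ a b : L, μ a b → θ a b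

/-- A prime filter of the underlying lattice of `L`. -/
def IsPrimeFilter (P : Set L) : Prop :=
  P.Nonempty ∧ P ≠ Set.univ ∧
  (∀ a b : L, a ∈ P → a ≤ b → b ∈ P) ∧
  (∀ a b : L, a ∈ P → b ∈ P → a ⊓ b ∈ P) ∧
  (∀ a b : L, a ⊔ b ∈ P → a ∈ P ∨ b ∈ P)

/-- The Birula–Rasiowa transformation. -/
def phi (P : Set L) : Set L := {a : L | dm a ∉ P}

/-- `P` is a maximal prime filter. -/
def IsMaximalPF (P : Set L) : Prop :=
  IsPrimeFilter P ∧ ∀ Q : Set L, IsPrimeFilter Q → P ⊆ Q → Q = P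

/-- `P` is a minimal prime filter. -/
def IsMinimalPF (P : Set L) : Prop :=
  IsPrimeFilter P ∧ ∀ Q : Set L, IsPrimeFilter Q → Q ⊆ P → Q = P

/-- The body of `L`: prime filters that are neither maximal nor minimal. -/
def body (L : Type*) [PMAlgebra L] : Set (Set L) :=
  {P : Set L | IsPrimeFilter P ∧ ¬ IsMaximalPF P ∧ ¬ IsMinimalPF P}

/-- The prime filter space of `L` is φ-connected. -/
def PhiConnected (L : Type*) [PMAlgebra L] : Prop :=
  ∀ S : Set (Set L), S ⊆ {P : Set L | IsPrimeFilter P} → S.Nonempty →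
    (∀ P Q : Set L, P ∈ S → IsPrimeFilter Q → P ⊆ Q → Q ∈ S) →
    (∀ P Q : Set L, P ∈ S → IsPrimeFilter Q → Q ⊆ P → Q ∈ S) →
    (∀ P : Set L, P ∈ S → phi P ∈ S) →
    S = {P : Set L | IsPrimeFilter P}

/-- The Kleene identity. -/
def Kleene (L : Type*) [PMAlgebra L] : Prop :=
  ∀ a b : L, a ⊓ dm a ≤ b ⊔ dm b

/-- The term `C(x) = (x ∧ x') ∨ (x ∧ x')*`. -/
def C (x : L) : L := (x ⊓ dm x) ⊔ pc (x ⊓ dm x)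

/-- The term `T(x) = C(x) ∧ C(x)'`. -/
def T (x : L) : L := C x ⊓ dm (C x)

end PMAlgebra

open PMAlgebra

/-!
Compare the two sides prime filter by prime filter. Write `d = a ∧ a'`, so that `C(a) = d ∨ d*`.
A maximal prime filter contains every `d ∨ d*`, hence both sides. A non-maximal prime filter `P`
lies below every maximal one, so it contains a pseudocomplement `z*` only when `z = 0`; and the
Kleene dichotomy (`P ⊆ φ(P)` or `φ(P) ⊆ P`) together with the type 1/2 hypothesis gives
`P ⊆ φ(P)`, so `d ∉ P`. As the Kleene identity gives `d ≤ T(a)`, both `C(a) ∈ P` and `T(a)* ∈ P`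
then mean exactly `d = 0`, and each side lies in `P` iff `a ∧ a' = 0` or `b ∧ b' = 0`.
-/

open Order

namespace PMAlgebra

variable {L : Type*} [PMAlgebra L]

theorem dm_antitone : Antitone (dm : L → L) := fun a b h => by
  rw [← inf_eq_left.2 h, dm_inf]
  exact le_sup_right

theorem dm_sup (a b : L) : dm (a ⊔ b) = dm a ⊓ dm b := by
  have h := dm_inf (dm a) (dm b)
  rw [dm_dm, dm_dm] at h
  rw [← h, dm_dm]

theorem dm_top : dm (⊤ : L) = ⊥ :=
  le_bot_iff.1 (dm_dm (⊥ : L) ▸ dm_antitone le_top)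

theorem inf_pc_eq_bot (a : L) : a ⊓ pc a = ⊥ := (pc_iff a _).2 le_rfl

theorem pc_bot : pc (⊥ : L) = ⊤ := top_le_iff.1 ((pc_iff ⊥ ⊤).1 (bot_inf_eq ⊤))

theorem pc_antitone : Antitone (pc : L → L) := fun a b h =>
  (pc_iff a (pc b)).1 (le_bot_iff.1 ((inf_le_inf_right _ h).trans (inf_pc_eq_bot b).le))

theorem C_eq_top {x : L} (h : x ⊓ dm x = ⊥) : C x = ⊤ := by
  rw [C, h, pc_bot, bot_sup_eq]

theorem T_eq_bot {x : L} (h : x ⊓ dm x = ⊥) : T x = ⊥ := by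
  rw [T, C_eq_top h, dm_top, inf_bot_eq]

theorem inf_dm_le_T (hk : Kleene L) (x : L) : x ⊓ dm x ≤ T x := by
  set d := x ⊓ dm x
  have hd_dm : d ≤ dm d := by
    rw [dm_inf, dm_dm]
    exact inf_le_left.trans le_sup_right
  have hd_dm_pc : d ≤ dm (pc d) :=
    calc d = d ⊓ (pc d ⊔ dm (pc d)) := (inf_eq_left.2 (hk x (pc d))).symm
      _ = d ⊓ dm (pc d) := by rw [inf_sup_left, inf_pc_eq_bot, bot_sup_eq]
      _ ≤ dm (pc d) := inf_le_right
  rw [T, C, dm_sup]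
  exact le_inf le_sup_left (le_inf hd_dm hd_dm_pc)

namespace IsPrimeFilter

variable {P : Set L} {a b : L}

theorem mem_of_le (hP : IsPrimeFilter P) (ha : a ∈ P) (hab : a ≤ b) : b ∈ P :=
  hP.2.2.1 a b ha hab

theorem inf_mem (hP : IsPrimeFilter P) (ha : a ∈ P) (hb : b ∈ P) : a ⊓ b ∈ P :=
  hP.2.2.2.1 a b ha hb

theorem sup_mem_iff (hP : IsPrimeFilter P) : a ⊔ b ∈ P ↔ a ∈ P ∨ b ∈ P :=
  ⟨hP.2.2.2.2 a b, fun h => h.elim (hP.mem_of_le · le_sup_left) (hP.mem_of_le · le_sup_right)⟩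

theorem top_mem (hP : IsPrimeFilter P) : ⊤ ∈ P :=
  hP.1.elim fun _ ha => hP.mem_of_le ha le_top

theorem bot_notMem (hP : IsPrimeFilter P) : ⊥ ∉ P := fun h =>
  hP.2.1 (Set.eq_univ_of_forall fun _ => hP.mem_of_le h bot_le)

theorem pc_notMem (hP : IsPrimeFilter P) (ha : a ∈ P) : pc a ∉ P := fun h =>
  hP.bot_notMem (inf_pc_eq_bot a ▸ hP.inf_mem ha h)

theorem phi (hP : IsPrimeFilter P) : IsPrimeFilter (PMAlgebra.phi P) := by
  refine ⟨⟨⊤, ?_⟩, fun h => ?_, fun a b ha hab hb => ha (hP.mem_of_le hb (dm_antitone hab)),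
    fun a b ha hb h => ?_, fun a b h => ?_⟩
  · simpa only [PMAlgebra.phi, Set.mem_ofPred_eq, dm_top] using hP.bot_notMem
  · have h_bot : (⊥ : L) ∈ PMAlgebra.phi P := h ▸ Set.mem_univ ⊥
    exact h_bot (by simpa only [← dm_top, dm_dm] using hP.top_mem)
  · rw [dm_inf, hP.sup_mem_iff] at h
    exact h.elim ha hb
  · by_contra! hab
    exact h (by simpa only [dm_sup] using hP.inf_mem (not_not.1 hab.1) (not_not.1 hab.2))

end IsPrimeFilter

theorem exists_isPrimeFilter_of_notMem (F : PFilter L) {v : L} (hv : v ∉ F) :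
    ∃ P : Set L, IsPrimeFilter P ∧ (F : Set L) ⊆ P ∧ v ∉ P := by
  obtain ⟨J, hJ, hvJ, hFJ⟩ := DistribLattice.prime_ideal_of_disjoint_filter_ideal
    (F := F) (I := Ideal.principal v)
    (Set.disjoint_left.2 fun _ hx hxv => hv (F.mem_of_le hxv hx))
  have hFJ : (F : Set L) ⊆ (J : Set L)ᶜ := Set.disjoint_left.1 hFJ
  let G := hJ.compl_filter.toPFilter
  refine ⟨(J : Set L)ᶜ, ⟨F.nonempty.mono hFJ, fun h => ?_, fun a b ha hab => G.mem_of_le hab ha,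
      fun a b ha hb => PFilter.inf_mem (F := G) ha hb, fun a b hab => ?_⟩,
    hFJ, not_not.2 (hvJ le_rfl)⟩
  · exact (h ▸ Set.mem_univ v : v ∈ (J : Set L)ᶜ) (hvJ le_rfl)
  · by_contra! h
    exact hab (J.sup_mem (not_not.1 h.1) (not_not.1 h.2))

theorem exists_isPrimeFilter_of_not_le {u v : L} (h : ¬u ≤ v) :
    ∃ P : Set L, IsPrimeFilter P ∧ u ∈ P ∧ v ∉ P :=
  (exists_isPrimeFilter_of_notMem (PFilter.principal u) h).imp
    fun _ ⟨hP, huP, hvP⟩ => ⟨hP, huP (PFilter.mem_principal.2 le_rfl), hvP⟩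

theorem le_of_forall_isPrimeFilter {u v : L}
    (h : ∀ P : Set L, IsPrimeFilter P → u ∈ P → v ∈ P) : u ≤ v := by
  by_contra hle
  obtain ⟨P, hP, huP, hvP⟩ := exists_isPrimeFilter_of_not_le hle
  exact hvP (h P hP huP)

theorem eq_of_forall_isPrimeFilter_mem_iff {u v : L}
    (h : ∀ P : Set L, IsPrimeFilter P → (u ∈ P ↔ v ∈ P)) : u = v :=
  le_antisymm (le_of_forall_isPrimeFilter fun P hP => (h P hP).1)
    (le_of_forall_isPrimeFilter fun P hP => (h P hP).2)

theorem exists_isPrimeFilter_superset_of_pc_notMem {P : Set L} (hP : IsPrimeFilter P) {a : L}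
    (ha : pc a ∉ P) : ∃ R : Set L, IsPrimeFilter R ∧ P ⊆ R ∧ a ∈ R := by
  have hF : IsPFilter {z : L | ∃ p ∈ P, p ⊓ a ≤ z} := by
    refine IsPFilter.of_def ⟨a, ⊤, hP.top_mem, inf_le_right⟩ ?_
      fun hzw ⟨p, hp, hpz⟩ => ⟨p, hp, hpz.trans hzw⟩
    rintro z ⟨p, hp, hpz⟩ w ⟨q, hq, hqw⟩
    refine ⟨p ⊓ q ⊓ a, ⟨p ⊓ q, hP.inf_mem hp hq, le_rfl⟩, ?_, ?_⟩
    · exact le_trans (inf_le_inf_right a inf_le_left) hpz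
    · exact le_trans (inf_le_inf_right a inf_le_right) hqw
  have hbot : (⊥ : L) ∉ hF.toPFilter := fun ⟨p, hp, hpa⟩ =>
    ha (hP.mem_of_le hp ((pc_iff a p).1 (inf_comm a p ▸ le_bot_iff.1 hpa)))
  obtain ⟨R, hR, hFR, -⟩ := exists_isPrimeFilter_of_notMem hF.toPFilter hbot
  exact ⟨R, hR, fun p hp => hFR ⟨p, hp, inf_le_left⟩, hFR ⟨⊤, hP.top_mem, inf_le_right⟩⟩

theorem sup_pc_mem_of_isMaximalPF {Q : Set L} (hQ : IsMaximalPF Q) (z : L) : z ⊔ pc z ∈ Q := by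
  rw [hQ.1.sup_mem_iff, or_iff_not_imp_right]
  intro hz
  obtain ⟨R, hR, hQR, hzR⟩ := exists_isPrimeFilter_superset_of_pc_notMem hQ.1 hz
  exact hQ.2 R hR hQR ▸ hzR

theorem C_mem_of_isMaximalPF {Q : Set L} (hQ : IsMaximalPF Q) (x : L) : C x ∈ Q :=
  sup_pc_mem_of_isMaximalPF hQ _

theorem isPrimeFilter_sUnion {c : Set (Set L)} (hc : ∀ P ∈ c, IsPrimeFilter P)
    (hchain : IsChain (· ⊆ ·) c) (hne : c.Nonempty) : IsPrimeFilter (⋃₀ c) := by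
  obtain ⟨P₀, hP₀⟩ := hne
  refine ⟨⟨⊤, P₀, hP₀, (hc P₀ hP₀).top_mem⟩, fun h => ?_, ?_, ?_, ?_⟩
  · obtain ⟨P, hP, hbot⟩ := (h ▸ Set.mem_univ ⊥ : (⊥ : L) ∈ ⋃₀ c)
    exact (hc P hP).bot_notMem hbot
  · rintro a b ⟨P, hP, ha⟩ hab
    exact ⟨P, hP, (hc P hP).mem_of_le ha hab⟩
  · rintro a b ⟨P, hP, ha⟩ ⟨Q, hQ, hb⟩
    rcases hchain.total hP hQ with hPQ | hQP
    · exact ⟨Q, hQ, (hc Q hQ).inf_mem (hPQ ha) hb⟩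
    · exact ⟨P, hP, (hc P hP).inf_mem ha (hQP hb)⟩
  · rintro a b ⟨P, hP, hab⟩
    exact ((hc P hP).sup_mem_iff.1 hab).imp (⟨P, hP, ·⟩) (⟨P, hP, ·⟩)

theorem exists_isMaximalPF_superset {P : Set L} (hP : IsPrimeFilter P) :
    ∃ Q : Set L, IsMaximalPF Q ∧ P ⊆ Q := by
  obtain ⟨Q, hPQ, hQ⟩ := zorn_subset_nonempty {Q : Set L | IsPrimeFilter Q ∧ P ⊆ Q}
    (fun c hc hchain hne => ⟨⋃₀ c,
      ⟨isPrimeFilter_sUnion (fun Q hQ => (hc hQ).1) hchain hne,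
        hne.elim fun Q hQ => (hc hQ).2.trans (Set.subset_sUnion_of_mem hQ)⟩,
      fun _ => Set.subset_sUnion_of_mem⟩) P ⟨hP, le_rfl⟩
  exact ⟨Q, ⟨hQ.prop.1, fun R hR hQR => hQ.eq_of_ge ⟨hR, hPQ.trans hQR⟩ hQR⟩, hPQ⟩

theorem subset_phi_or_phi_subset (hk : Kleene L) {P : Set L} (hP : IsPrimeFilter P) :
    P ⊆ phi P ∨ phi P ⊆ P := by
  by_contra! h
  obtain ⟨s, hsP, hs⟩ := Set.not_subset.1 h.1
  obtain ⟨t, ht, htP⟩ := Set.not_subset.1 h.2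
  have hss' : s ⊓ dm s ∈ P := hP.inf_mem hsP (not_not.1 hs)
  exact (hP.sup_mem_iff.1 (hP.mem_of_le hss' (hk s t))).elim htP ht

theorem subset_phi_of_not_isMaximalPF (hk : Kleene L) (hfix : ∀ P ∈ body L, phi P = P)
    {P : Set L} (hP : IsPrimeFilter P) (hmax : ¬ IsMaximalPF P) : P ⊆ phi P := by
  rcases subset_phi_or_phi_subset hk hP with h | h
  · exact h
  by_cases hmin : IsMinimalPF P
  · rw [hmin.2 (phi P) hP.phi h]
  · rw [hfix P ⟨hP, hmax, hmin⟩]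

theorem eq_bot_of_pc_mem_of_not_isMaximalPF
    (hbundle : ∀ P Q : Set L, IsPrimeFilter P → ¬ IsMaximalPF P → IsMaximalPF Q → P ⊆ Q)
    {P : Set L} (hP : IsPrimeFilter P) (hmax : ¬ IsMaximalPF P) {z : L} (hz : pc z ∈ P) :
    z = ⊥ := by
  by_contra hz_ne
  obtain ⟨R, hR, hzR, -⟩ :=
    exists_isPrimeFilter_of_not_le (u := z) (v := ⊥) (hz_ne <| le_bot_iff.1 ·)
  obtain ⟨Q, hQ, hRQ⟩ := exists_isMaximalPF_superset hR
  exact hQ.1.pc_notMem (hRQ hzR) (hbundle P Q hP hmax hQ hz)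

theorem C_mem_iff_inf_dm_eq_bot {P : Set L} (hP : IsPrimeFilter P) (hsub : P ⊆ phi P)
    (hpc : ∀ z, pc z ∈ P → z = ⊥) (x : L) : C x ∈ P ↔ x ⊓ dm x = ⊥ := by
  refine ⟨fun h => ?_, fun h => C_eq_top h ▸ hP.top_mem⟩
  rcases hP.sup_mem_iff.1 h with hd | hpcd
  · exact absurd (hP.mem_of_le hd inf_le_right) (hsub (hP.mem_of_le hd inf_le_left))
  · exact hpc _ hpcd

theorem pc_T_mem_iff_inf_dm_eq_bot (hk : Kleene L) {P : Set L} (hP : IsPrimeFilter P)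
    (hpc : ∀ z, pc z ∈ P → z = ⊥) (x : L) : pc (T x) ∈ P ↔ x ⊓ dm x = ⊥ :=
  ⟨fun h => hpc _ (hP.mem_of_le h (pc_antitone (inf_dm_le_T hk x))),
    fun h => by simpa only [T_eq_bot h, pc_bot] using hP.top_mem⟩

theorem pc_T_sup_C_mem_iff (hk : Kleene L)
    (hbundle : ∀ P Q : Set L, IsPrimeFilter P → ¬ IsMaximalPF P → IsMaximalPF Q → P ⊆ Q)
    (hfix : ∀ P ∈ body L, phi P = P) {P : Set L} (hP : IsPrimeFilter P) (a b : L) :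
    pc (T a) ⊔ C b ∈ P ↔ C a ⊔ pc (T b) ∈ P := by
  by_cases hmax : IsMaximalPF P
  · exact iff_of_true (hP.mem_of_le (C_mem_of_isMaximalPF hmax b) le_sup_right)
      (hP.mem_of_le (C_mem_of_isMaximalPF hmax a) le_sup_left)
  have hsub := subset_phi_of_not_isMaximalPF hk hfix hP hmax
  have hpc z := eq_bot_of_pc_mem_of_not_isMaximalPF hbundle hP hmax (z := z)
  rw [hP.sup_mem_iff, hP.sup_mem_iff, pc_T_mem_iff_inf_dm_eq_bot hk hP hpc,
    pc_T_mem_iff_inf_dm_eq_bot hk hP hpc, C_mem_iff_inf_dm_eq_bot hP hsub hpc,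
    C_mem_iff_inf_dm_eq_bot hP hsub hpc, or_comm]

end PMAlgebra

theorem gamma_symmetric_of_type12_general {L : Type*} [PMAlgebra L]
    (hk : Kleene L)
    (hbundle : ∀ P Q : Set L, IsPrimeFilter P → ¬ IsMaximalPF P →
      IsMaximalPF Q → P ⊆ Q)
    (hfix : ∀ P ∈ body L, phi P = P) :
    ∀ a b : L, pc (T a) ⊔ C b = C a ⊔ pc (T b) := fun a b =>
  eq_of_forall_isPrimeFilter_mem_iff fun _ hP => pc_T_sup_C_mem_iff hk hbundle hfix hP a b

/-- A subdirectly irreducible pk-algebra whose dual space is of Type 1 or 2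
(every non-maximal prime filter is below every maximal one and every body
element is a fixed point of `φ`) satisfies `T(a)* ∨ C(b) = C(a) ∨ T(b)*`. -/
theorem gamma_symmetric_of_type12 {L : Type*} [PMAlgebra L]
    (hk : Kleene L) (hsi : SubdirectlyIrreducible L)
    (hbundle : ∀ P Q : Set L, IsPrimeFilter P → ¬ IsMaximalPF P →
      IsMaximalPF Q → P ⊆ Q)
    (hfix : ∀ P ∈ body L, phi P = P) :
    ∀ a b : L, pc (T a) ⊔ C b = C a ⊔ pc (T b) :=
  gamma_symmetric_of_type12_general hk hbundle hfix
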